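/- arXiv:1204.2086 — 4 statements merged into one kernel-verified Lean document; each statement's English description precedes it below -/
import Mathlib

section
/- Let p, q > 1 with 1/p + 1/q = 1, and let u, v ∈ L¹(ℝ) be nonnegative. For t > 0 set u(·,t) = u * M_{2t} and v(·,t) = v * M_{2t}, the solutions of the heat equation w_t = w_xx with initial data u and v. Then the function Φ_{u,v}(t) = ∫_ℝ u(x,t)^{1/p} v(x,t)^{1/q} dx is nondecreasing in t on (0, ∞). -/
open MeasureTheory Real

/-- The centered Gaussian density on `ℝ` with variance `s`. -/
noncomputable def gauss (s : ℝ) : ℝ → ℝ :=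
  fun x => (2 * Real.pi * s) ^ (-(1:ℝ)/2) * Real.exp (-x ^ 2 / (2 * s))

/-- `heatSol w t = w * M_{2t}`, the solution at time `t` of the heat equation
`w_t = w_xx` with initial datum `w`. -/
noncomputable def heatSol (w : ℝ → ℝ) (t : ℝ) : ℝ → ℝ :=
  fun x => ∫ y, w (x - y) * gauss (2 * t) y

/-!
The heat flow at time `t` is convolution with the Gaussian probability measure of variance `2t`,
and these measures form a convolution semigroup, so `u(·,t') = u(·,t) * M_{2(t'-t)}`.
Hölder's inequality for the probability measure `M_{2(t'-t)}` gives pointwise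
`(u(·,t)^{1/p} v(·,t)^{1/q}) * M ≤ u(·,t')^{1/p} v(·,t')^{1/q}`, and convolution with a
probability measure preserves the integral. Working with `ℝ≥0∞`-valued integrals avoids all
integrability side conditions until the final comparison of real parts.
-/

open scoped ENNReal NNReal
open ProbabilityTheory

section LConv

variable {G : Type*} [AddCommGroup G] [MeasurableSpace G] [MeasurableAdd₂ G] [MeasurableNeg G]
  {μ ν ρ : Measure G} {f g : G → ℝ≥0∞}

noncomputable def lconv (f : G → ℝ≥0∞) (ν : Measure G) (x : G) : ℝ≥0∞ :=
  ∫⁻ y, f (x - y) ∂ν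

variable [SFinite ν]

theorem measurable_lconv (hf : Measurable f) : Measurable (lconv f ν) :=
  (hf.comp (measurable_fst.sub measurable_snd)).lintegral_prod_right'

theorem lintegral_lconv [SFinite μ] [μ.IsAddRightInvariant] (hf : Measurable f) :
    ∫⁻ x, lconv f ν x ∂μ = ν Set.univ * ∫⁻ x, f x ∂μ := by
  unfold lconv
  rw [lintegral_lintegral_swap (by fun_prop)]
  simp_rw [lintegral_sub_right_eq_self, lintegral_const, mul_comm]

theorem lconv_conv [SFinite ρ] (hf : Measurable f) : lconv f (ρ ∗ ν) = lconv (lconv f ρ) ν := by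
  ext x
  rw [lconv, Measure.conv_comm, Measure.lintegral_conv (f := fun y => f (x - y)) (by fun_prop)]
  simp_rw [sub_add_eq_sub_sub]
  rfl

variable [IsProbabilityMeasure ν] [SFinite μ] [μ.IsAddRightInvariant] {a b : ℝ}

theorem lintegral_rpow_mul_rpow_le_lintegral_lconv (hf : Measurable f) (hg : Measurable g)
    (ha : 0 ≤ a) (hb : 0 ≤ b) (hab : a + b = 1) :
    ∫⁻ x, f x ^ a * g x ^ b ∂μ ≤ ∫⁻ x, lconv f ν x ^ a * lconv g ν x ^ b ∂μ := by
  calc ∫⁻ x, f x ^ a * g x ^ b ∂μ = ∫⁻ x, lconv (fun y => f y ^ a * g y ^ b) ν x ∂μ := by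
        rw [lintegral_lconv (by fun_prop), measure_univ, one_mul]
    _ ≤ _ := lintegral_mono fun x =>
        ENNReal.lintegral_mul_norm_pow_le (by fun_prop) (by fun_prop) ha hb hab

theorem lintegral_lconv_rpow_mul_rpow_le (hf : Measurable f) (hg : Measurable g)
    (ha : 0 ≤ a) (hb : 0 ≤ b) (hab : a + b = 1) :
    ∫⁻ x, lconv f ν x ^ a * lconv g ν x ^ b ∂μ ≤ (∫⁻ x, f x ∂μ) ^ a * (∫⁻ x, g x ∂μ) ^ b := by
  simpa only [lintegral_lconv hf, lintegral_lconv hg, measure_univ, one_mul] using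
    ENNReal.lintegral_mul_norm_pow_le (μ := μ) (measurable_lconv (ν := ν) hf).aemeasurable
      (measurable_lconv (ν := ν) hg).aemeasurable ha hb hab

end LConv

-- The measure `M_{2t}(y) dy`; for `t ≤ 0` it is the Dirac mass at `0`.
noncomputable def heatKernel (t : ℝ) : Measure ℝ := gaussianReal 0 (2 * t).toNNReal

instance (t : ℝ) : IsProbabilityMeasure (heatKernel t) := by
  unfold heatKernel
  infer_instance

theorem heatKernel_conv {s t : ℝ} (hs : 0 ≤ s) (ht : 0 ≤ t) :
    heatKernel s ∗ heatKernel t = heatKernel (s + t) := by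
  rw [heatKernel, heatKernel, gaussianReal_conv_gaussianReal, add_zero,
    ← Real.toNNReal_add (by positivity) (by positivity), ← mul_add]
  rfl

theorem heatKernel_absolutelyContinuous {t : ℝ} (ht : 0 < t) : heatKernel t ≪ volume :=
  gaussianReal_absolutelyContinuous 0 (by simpa using ht)

theorem gauss_eq_gaussianPDFReal {s : ℝ} (hs : 0 ≤ s) : gauss s = gaussianPDFReal 0 s.toNNReal := by
  ext x
  rw [gauss, gaussianPDFReal, Real.coe_toNNReal _ hs, sub_zero, sqrt_eq_rpow,
    ← rpow_neg (by positivity)]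
  norm_num

theorem heatSol_eq_integral_heatKernel (w : ℝ → ℝ) {t : ℝ} (ht : 0 < t) (x : ℝ) :
    heatSol w t x = ∫ y, w (x - y) ∂heatKernel t := by
  rw [heatKernel, integral_gaussianReal_eq_integral_smul (by simpa using ht), heatSol,
    gauss_eq_gaussianPDFReal (by positivity)]
  simp_rw [smul_eq_mul, mul_comm]

theorem heatSol_eq_toReal_lconv {w : ℝ → ℝ} {f : ℝ → ℝ≥0∞} (hw : AEStronglyMeasurable w)
    (hw0 : ∀ x, 0 ≤ w x) (hwf : (fun x => ENNReal.ofReal (w x)) =ᵐ[volume] f)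
    {t : ℝ} (ht : 0 < t) (x : ℝ) :
    heatSol w t x = (lconv f (heatKernel t) x).toReal := by
  have hsub := quasiMeasurePreserving_sub_left volume x
  have hac := heatKernel_absolutelyContinuous ht
  rw [heatSol_eq_integral_heatKernel w ht, integral_eq_lintegral_of_nonneg_ae
    (ae_of_all _ fun y => hw0 (x - y)) ((hw.comp_quasiMeasurePreserving hsub).mono_ac hac)]
  exact congrArg ENNReal.toReal (lintegral_congr_ae (hac.ae_le (hsub.ae_eq_comp hwf)))

theorem monotoneOn_lintegral_lconv_heatKernel {f g : ℝ → ℝ≥0∞} (hf : Measurable f)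
    (hg : Measurable g) {a b : ℝ} (ha : 0 ≤ a) (hb : 0 ≤ b) (hab : a + b = 1) :
    MonotoneOn (fun t => ∫⁻ x, lconv f (heatKernel t) x ^ a * lconv g (heatKernel t) x ^ b)
      (Set.Ici 0) := by
  intro s (hs : 0 ≤ s) t (ht : 0 ≤ t) hst
  have hsplit : heatKernel t = heatKernel s ∗ heatKernel (t - s) := by
    rw [heatKernel_conv hs (sub_nonneg.mpr hst), add_sub_cancel]
  simp only [hsplit, lconv_conv hf, lconv_conv hg]
  exact lintegral_rpow_mul_rpow_le_lintegral_lconv (measurable_lconv hf) (measurable_lconv hg)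
    ha hb hab

/-- The functional `Φ_{u,v}(t) = ∫ u(x,t)^{1/p} v(x,t)^{1/q} dx` is nondecreasing
in `t` on `(0, ∞)`. -/
theorem holder_functional_monotone (p q : ℝ) (hp : 1 < p) (hq : 1 < q)
    (hpq : 1/p + 1/q = 1) (u v : ℝ → ℝ)
    (hu : Integrable u) (hv : Integrable v)
    (hu0 : ∀ x, 0 ≤ u x) (hv0 : ∀ x, 0 ≤ v x) :
    MonotoneOn (fun t => ∫ x, heatSol u t x ^ (1/p) * heatSol v t x ^ (1/q))
      (Set.Ioi (0:ℝ)) := by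
  have ha : 0 ≤ 1 / p := by positivity
  have hb : 0 ≤ 1 / q := by positivity
  obtain ⟨f, hf, huf⟩ := hu.1.aemeasurable.ennreal_ofReal
  obtain ⟨g, hg, hvg⟩ := hv.1.aemeasurable.ennreal_ofReal
  set Φ : ℝ → ℝ≥0∞ := fun t =>
    ∫⁻ x, lconv f (heatKernel t) x ^ (1/p) * lconv g (heatKernel t) x ^ (1/q)
  have hΦ_ne_top (t : ℝ) : Φ t ≠ ∞ := by
    refine ne_top_of_le_ne_top ?_ (lintegral_lconv_rpow_mul_rpow_le hf hg ha hb hpq)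
    rw [← lintegral_congr_ae huf, ← lintegral_congr_ae hvg]
    exact ENNReal.mul_ne_top (ENNReal.rpow_ne_top_of_nonneg ha hu.lintegral_lt_top.ne)
      (ENNReal.rpow_ne_top_of_nonneg hb hv.lintegral_lt_top.ne)
  have hΦ_eq {t : ℝ} (ht : 0 < t) :
      ∫ x, heatSol u t x ^ (1/p) * heatSol v t x ^ (1/q) = (Φ t).toReal := by
    have hmeas : Measurable fun x =>
        lconv f (heatKernel t) x ^ (1/p) * lconv g (heatKernel t) x ^ (1/q) := by
      have := measurable_lconv (ν := heatKernel t) hf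
      have := measurable_lconv (ν := heatKernel t) hg
      fun_prop
    rw [← integral_toReal hmeas.aemeasurable (ae_lt_top hmeas (hΦ_ne_top t))]
    congr 1 with x
    rw [heatSol_eq_toReal_lconv hu.1 hu0 huf ht, heatSol_eq_toReal_lconv hv.1 hv0 hvg ht,
      ENNReal.toReal_mul, ENNReal.toReal_rpow, ENNReal.toReal_rpow]
  intro s hs t ht hst
  dsimp only
  rw [hΦ_eq hs, hΦ_eq ht]
  exact ENNReal.toReal_mono (hΦ_ne_top t) <|
    (monotoneOn_lintegral_lconv_heatKernel hf hg ha hb hpq).mono Set.Ioi_subset_Ici_self hs ht hst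
end

section
/- Let f and g be smooth strictly positive probability density functions on ℝ with finite Fisher information, and let a, b > 0. Then (a + b)² I(f*g) ≤ a² I(f) + b² I(g) (Blachman–Stam inequality; the case r = 1 of the convolution inequality of Lemma 3.2). -/
open MeasureTheory Real

/-- Convolution on `ℝ`. -/
noncomputable def conv (f g : ℝ → ℝ) : ℝ → ℝ := fun x => ∫ y, f (x - y) * g y

/-- The Fisher information `I(f) = ∫ f'(x)²/f(x) dx` of a positive density `f`. -/
noncomputable def fisherInfo (f : ℝ → ℝ) : ℝ := ∫ x, (deriv f x) ^ 2 / f x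

/- ### Auxiliary lemmas -/

/-- Cauchy–Schwarz inequality for integrals. -/
lemma cs_integral {μ : Measure ℝ} {u v : ℝ → ℝ}
    (hu : Integrable (fun y => u y ^ 2) μ) (hv : Integrable (fun y => v y ^ 2) μ)
    (huv : Integrable (fun y => u y * v y) μ) :
    (∫ y, u y * v y ∂μ) ^ 2 ≤ (∫ y, u y ^ 2 ∂μ) * (∫ y, v y ^ 2 ∂μ) := by
  set A := ∫ y, u y ^ 2 ∂μ with hA
  set B := ∫ y, u y * v y ∂μ with hB
  set C := ∫ y, v y ^ 2 ∂μ with hC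
  have key : ∀ l : ℝ, 0 ≤ C * (l * l) + (2 * B) * l + A := by
    intro l
    have h0 : 0 ≤ ∫ y, (u y + l * v y) ^ 2 ∂μ :=
      integral_nonneg fun y => sq_nonneg _
    have hexp : ∫ y, (u y + l * v y) ^ 2 ∂μ
        = A + (2 * l) * B + (l ^ 2) * C := by
      have : (fun y => (u y + l * v y) ^ 2)
          = fun y => u y ^ 2 + ((2 * l) * (u y * v y) + l ^ 2 * v y ^ 2) := by
        funext y; ring
      have i1 : Integrable (fun y => 2 * l * (u y * v y)) μ := huv.const_mul _
      have i2 : Integrable (fun y => l ^ 2 * v y ^ 2) μ := hv.const_mul _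
      have i12 : Integrable (fun y => 2 * l * (u y * v y) + l ^ 2 * v y ^ 2) μ := i1.add i2
      rw [this, integral_add hu i12, integral_add i1 i2,
        MeasureTheory.integral_const_mul, MeasureTheory.integral_const_mul]
      ring
    nlinarith [h0, hexp]
  have := discrim_le_zero key
  rw [discrim] at this
  nlinarith [this]

lemma deriv_cont {f : ℝ → ℝ} (hf : ContDiff ℝ (⊤ : ℕ∞) f) : Continuous (deriv f) :=
  hf.continuous_deriv (by simp)

/-- The derivative of a positive density with finite Fisher information is integrable. -/
lemma deriv_integrable {f : ℝ → ℝ} (hf : ContDiff ℝ (⊤ : ℕ∞) f) (hfpos : ∀ x, 0 < f x)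
    (hfi : Integrable f) (hIf : Integrable (fun x => (deriv f x) ^ 2 / f x)) :
    Integrable (deriv f) := by
  have hbd : Integrable (fun x => 1/2 * ((deriv f x) ^ 2 / f x + f x)) :=
    (hIf.add hfi).const_mul (1/2 : ℝ)
  refine hbd.mono' ((deriv_cont hf).aestronglyMeasurable) ?_
  filter_upwards with x
  have hfx := hfpos x
  have hdm : (deriv f x) ^ 2 / f x * f x = (deriv f x) ^ 2 :=
    div_mul_cancel₀ _ (ne_of_gt hfx)
  rw [Real.norm_eq_abs]
  nlinarith [hdm, hfx, sq_nonneg (|deriv f x| - f x), sq_abs (deriv f x),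
    abs_nonneg (deriv f x)]

/-- A function with integrable derivative is bounded in terms of `∫ ‖f'‖`. -/
lemma norm_le_of_deriv {f : ℝ → ℝ} (hf : ContDiff ℝ (⊤ : ℕ∞) f) (h'i : Integrable (deriv f)) (x : ℝ) :
    ‖f x‖ ≤ ‖f 0‖ + ∫ y, ‖deriv f y‖ := by
  have key : f x - f 0 = ∫ y in (0:ℝ)..x, deriv f y :=
    (intervalIntegral.integral_deriv_eq_sub
      (fun y _ => (hf.differentiable (by simp)).differentiableAt)
      (h'i.intervalIntegrable)).symm
  have h1 : ‖∫ y in (0:ℝ)..x, deriv f y‖ ≤ ∫ y in Set.uIoc 0 x, ‖deriv f y‖ :=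
    intervalIntegral.norm_integral_le_integral_norm_uIoc
  have h2 : ∫ y in Set.uIoc 0 x, ‖deriv f y‖ ≤ ∫ y, ‖deriv f y‖ :=
    setIntegral_le_integral h'i.norm (Filter.Eventually.of_forall fun y => norm_nonneg _)
  calc ‖f x‖ = ‖f 0 + (f x - f 0)‖ := by ring_nf
    _ ≤ ‖f 0‖ + ‖f x - f 0‖ := norm_add_le _ _
    _ ≤ ‖f 0‖ + ∫ y, ‖deriv f y‖ := by rw [key]; linarith

/-- The integral of the derivative of an integrable function with integrable
derivative vanishes. -/
lemma integral_deriv_zero {f : ℝ → ℝ} (hf : ContDiff ℝ (⊤ : ℕ∞) f) (hfi : Integrable f)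
    (h'i : Integrable (deriv f)) : ∫ x, deriv f x = 0 := by
  have hd : ∀ x, HasDerivAt f (deriv f x) x := fun x =>
    ((hf.differentiable (by simp)) x).hasDerivAt
  have htop : Filter.Tendsto f Filter.atTop (nhds 0) :=
    tendsto_zero_of_hasDerivAt_of_integrableOn_Ioi (a := 0) (fun x _ => hd x)
      h'i.integrableOn hfi.integrableOn
  have hbot : Filter.Tendsto f Filter.atBot (nhds 0) :=
    tendsto_zero_of_hasDerivAt_of_integrableOn_Iic (a := 0) (fun x _ => hd x)
      h'i.integrableOn hfi.integrableOn
  have h1 : ∫ x in Set.Ioi (0:ℝ), deriv f x = 0 - f 0 :=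
    integral_Ioi_of_hasDerivAt_of_tendsto' (fun x _ => hd x) h'i.integrableOn htop
  have h2 : ∫ x in Set.Iic (0:ℝ), deriv f x = f 0 - 0 :=
    integral_Iic_of_hasDerivAt_of_tendsto' (fun x _ => hd x) h'i.integrableOn hbot
  rw [← intervalIntegral.integral_Iic_add_Ioi h'i.integrableOn h'i.integrableOn, h1, h2]; ring

/-- The shear `(x, y) ↦ (x - y, y)` as a measurable equivalence. -/
def subProd : (ℝ × ℝ) ≃ᵐ (ℝ × ℝ) where
  toEquiv :=
    { toFun := fun p => (p.1 - p.2, p.2)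
      invFun := fun p => (p.1 + p.2, p.2)
      left_inv := fun p => by simp
      right_inv := fun p => by simp }
  measurable_toFun := (measurable_fst.sub measurable_snd).prodMk measurable_snd
  measurable_invFun := (measurable_fst.add measurable_snd).prodMk measurable_snd

lemma kernel_integrable {φ ψ : ℝ → ℝ} (hφ : Integrable φ) (hψ : Integrable ψ) :
    Integrable (fun p : ℝ × ℝ => φ (p.1 - p.2) * ψ p.2) (volume.prod volume) := by
  have h := hφ.mul_prod hψ
  have hT := measurePreserving_sub_prod (volume : Measure ℝ) volume
  exact (hT.integrable_comp h.aestronglyMeasurable).2 h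

lemma kernel_integral {φ ψ : ℝ → ℝ} (hφ : Integrable φ) (hψ : Integrable ψ) :
    ∫ p : ℝ × ℝ, φ (p.1 - p.2) * ψ p.2 ∂(volume.prod volume)
      = (∫ x, φ x) * ∫ x, ψ x := by
  have hT := measurePreserving_sub_prod (volume : Measure ℝ) volume
  have h := hT.integral_comp (MeasurableEquiv.measurableEmbedding subProd)
    (fun p : ℝ × ℝ => φ p.1 * ψ p.2)
  rw [← integral_prod_mul φ ψ]
  exact h

lemma integrable_mul_bdd {A B : ℝ → ℝ} (hA : Integrable A)
    (hBm : AEStronglyMeasurable B volume) {C : ℝ} (hB : ∀ x, ‖B x‖ ≤ C) :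
    Integrable (fun y => A y * B y) := by
  refine (hA.norm.mul_const C).mono' (hA.aestronglyMeasurable.mul hBm) ?_
  filter_upwards with y
  calc ‖A y * B y‖ = ‖A y‖ * ‖B y‖ := norm_mul _ _
    _ ≤ ‖A y‖ * C := by
        have := hB y
        have h0 : (0:ℝ) ≤ ‖A y‖ := norm_nonneg _
        nlinarith

/-- The convolution of densities is differentiable, with derivative `f' * g`. -/
lemma conv_hasDerivAt (f g : ℝ → ℝ)
    (hf : ContDiff ℝ (⊤ : ℕ∞) f) (hgc : Continuous g)
    (h'i : Integrable (deriv f)) (hfi : Integrable f) (hgi : Integrable g)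
    {Cg : ℝ} (hCg : ∀ x, ‖g x‖ ≤ Cg) :
    (Continuous fun x => ∫ y, deriv f (x - y) * g y) ∧
    ∀ x, HasDerivAt (conv f g) (∫ y, deriv f (x - y) * g y) x := by
  set D : ℝ → ℝ := fun x => ∫ y, deriv f (x - y) * g y with hD
  have hf' : Continuous (deriv f) := hf.continuous_deriv (by simp)
  have hDalt : ∀ x, D x = ∫ u, deriv f u * g (x - u) := by
    intro x
    have h := integral_sub_left_eq_self (fun u => deriv f u * g (x - u)) volume x
    simp only [sub_sub_cancel] at h
    exact h
  have hcont : Continuous D := by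
    have hDfun : D = fun x => ∫ u, deriv f u * g (x - u) := funext hDalt
    rw [hDfun]
    apply continuous_of_dominated (bound := fun u => ‖deriv f u‖ * Cg)
    · intro x
      exact (hf'.mul (hgc.comp (continuous_const.sub continuous_id))).aestronglyMeasurable
    · intro x
      filter_upwards with u
      calc ‖deriv f u * g (x - u)‖ = ‖deriv f u‖ * ‖g (x - u)‖ := norm_mul _ _
        _ ≤ ‖deriv f u‖ * Cg := by
            have := hCg (x - u); have h0 : (0:ℝ) ≤ ‖deriv f u‖ := norm_nonneg _; nlinarith
    · exact h'i.norm.mul_const Cg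
    · filter_upwards with u
      exact continuous_const.mul (hgc.comp (continuous_id.sub continuous_const))
  have int1 : ∀ x, Integrable (fun y => deriv f (x - y) * g y) :=
    fun x => integrable_mul_bdd (h'i.comp_sub_left x) hgc.aestronglyMeasurable hCg
  have intf : ∀ x, Integrable (fun y => f (x - y) * g y) :=
    fun x => integrable_mul_bdd (hfi.comp_sub_left x) hgc.aestronglyMeasurable hCg
  have key : ∀ a b : ℝ, a ≤ b → ∫ s in a..b, D s = conv f g b - conv f g a := by
    intro a b hab
    rw [intervalIntegral.integral_of_le hab]
    have hPint : Integrable (fun p : ℝ × ℝ => deriv f (p.1 - p.2) * g p.2)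
        ((volume.restrict (Set.Ioc a b)).prod volume) := by
      have hglob := kernel_integrable h'i hgi
      have hre : (volume.restrict (Set.Ioc a b)).prod (volume : Measure ℝ)
          = (volume.prod volume).restrict ((Set.Ioc a b) ×ˢ Set.univ) := by
        rw [← Measure.prod_restrict, Measure.restrict_univ]
      rw [hre]
      exact hglob.restrict
    have hswap := integral_integral_swap (f := fun s y => deriv f (s - y) * g y) hPint
    calc ∫ s in Set.Ioc a b, D s
        = ∫ y, ∫ s in Set.Ioc a b, deriv f (s - y) * g y := hswap
      _ = ∫ y, (∫ s in Set.Ioc a b, deriv f (s - y)) * g y := by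
          congr 1; funext y; exact integral_mul_const _ _
      _ = ∫ y, (f (b - y) - f (a - y)) * g y := by
          congr 1; funext y
          rw [← intervalIntegral.integral_of_le hab,
            intervalIntegral.integral_comp_sub_right (fun u => deriv f u) y,
            intervalIntegral.integral_deriv_eq_sub
              (fun u _ => (hf.differentiable (by simp)).differentiableAt)
              h'i.intervalIntegrable]
      _ = conv f g b - conv f g a := by
          simp only [conv]
          rw [← integral_sub (intf b) (intf a)]
          congr 1; funext y; ring
  have keyall : ∀ x : ℝ, conv f g x = conv f g 0 + ∫ s in (0:ℝ)..x, D s := by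
    intro x
    rcases le_total 0 x with h | h
    · rw [key 0 x h]; ring
    · rw [intervalIntegral.integral_symm, key x 0 h]; ring
  refine ⟨hcont, fun x => ?_⟩
  have hFTC : HasDerivAt (fun u => ∫ s in (0:ℝ)..u, D s) (D x) x :=
    (hcont.integral_hasStrictDerivAt 0 x).hasDerivAt
  have hfun : conv f g = fun u => conv f g 0 + ∫ s in (0:ℝ)..u, D s := funext keyall
  rw [hfun]
  exact hFTC.const_add _

lemma conv_comm (f g : ℝ → ℝ) : conv f g = conv g f := by
  funext x
  simp only [conv]
  have h := integral_sub_left_eq_self (fun u => g (x - u) * f u) volume x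
  simp only [sub_sub_cancel] at h
  rw [← h]
  congr 1; funext y; ring

lemma conv_pos {f g : ℝ → ℝ} (hfpos : ∀ x, 0 < f x) (hgpos : ∀ x, 0 < g x)
    (hint : ∀ x, Integrable (fun y => f (x - y) * g y)) (x : ℝ) :
    0 < conv f g x := by
  rw [conv]
  rw [integral_pos_iff_support_of_nonneg_ae
    (Filter.Eventually.of_forall fun y => (mul_pos (hfpos _) (hgpos _)).le) (hint x)]
  have : Function.support (fun y => f (x - y) * g y) = Set.univ := by
    apply Set.eq_univ_of_forall
    intro y
    exact (mul_pos (hfpos (x - y)) (hgpos y)).ne'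
  rw [this]
  simp

/-- Blachman–Stam inequality: for smooth strictly positive probability densities `f, g`
with finite Fisher information and `a, b > 0`, `(a+b)² I(f*g) ≤ a² I(f) + b² I(g)`. -/
theorem blachman_stam (f g : ℝ → ℝ)
    (hf : ContDiff ℝ (⊤ : ℕ∞) f) (hg : ContDiff ℝ (⊤ : ℕ∞) g)
    (hfpos : ∀ x, 0 < f x) (hgpos : ∀ x, 0 < g x)
    (hfi : Integrable f) (hgi : Integrable g)
    (hf1 : ∫ x, f x = 1) (hg1 : ∫ x, g x = 1)
    (hIf : Integrable (fun x => (deriv f x) ^ 2 / f x))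
    (hIg : Integrable (fun x => (deriv g x) ^ 2 / g x))
    (a b : ℝ) (ha : 0 < a) (hb : 0 < b) :
    (a + b) ^ 2 * fisherInfo (conv f g) ≤
      a ^ 2 * fisherInfo f + b ^ 2 * fisherInfo g := by
  have hab : (0:ℝ) < a + b := by linarith
  set t := a / (a + b) with ht
  set s := b / (a + b) with hs
  have hts : t + s = 1 := by rw [ht, hs]; field_simp
  have hfc : Continuous f := hf.continuous
  have hgc : Continuous g := hg.continuous
  have hf'i : Integrable (deriv f) := deriv_integrable hf hfpos hfi hIf
  have hg'i : Integrable (deriv g) := deriv_integrable hg hgpos hgi hIg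
  have hCf : ∀ x, ‖f x‖ ≤ ‖f 0‖ + ∫ y, ‖deriv f y‖ := norm_le_of_deriv hf hf'i
  have hCg : ∀ x, ‖g x‖ ≤ ‖g 0‖ + ∫ y, ‖deriv g y‖ := norm_le_of_deriv hg hg'i
  obtain ⟨hDc, hDd⟩ := conv_hasDerivAt f g hf hgc hf'i hfi hgi hCg
  obtain ⟨hEc, hEd⟩ := conv_hasDerivAt g f hg hfc hg'i hgi hfi hCf
  set D : ℝ → ℝ := fun x => ∫ y, deriv f (x - y) * g y with hD
  set E : ℝ → ℝ := fun x => ∫ y, deriv g (x - y) * f y with hE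
  have hDd' : ∀ x, HasDerivAt (conv f g) (D x) x := hDd
  have hEd' : ∀ x, HasDerivAt (conv g f) (E x) x := hEd
  have hderiv : ∀ x, deriv (conv f g) x = D x := fun x => (hDd' x).deriv
  have hDE : ∀ x, D x = E x := by
    intro x
    have h1 := (hDd' x).deriv
    have h2 := (hEd' x).deriv
    rw [conv_comm g f] at h2
    rw [← h1, ← h2]
  have hEalt : ∀ x, E x = ∫ u, deriv g u * f (x - u) := by
    intro x
    have h := integral_sub_left_eq_self (fun u => deriv g u * f (x - u)) volume x
    simp only [sub_sub_cancel] at h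
    exact h
  have intD : ∀ x, Integrable (fun y => deriv f (x - y) * g y) :=
    fun x => integrable_mul_bdd (hf'i.comp_sub_left x) hgc.aestronglyMeasurable hCg
  have intE : ∀ x, Integrable (fun y => deriv g y * f (x - y)) :=
    fun x => integrable_mul_bdd hg'i
      ((hfc.comp (continuous_const.sub continuous_id)).aestronglyMeasurable)
      (fun y => hCf (x - y))
  have intU : ∀ x, Integrable (fun y => f (x - y) * g y) :=
    fun x => integrable_mul_bdd (hfi.comp_sub_left x) hgc.aestronglyMeasurable hCg
  have hhpos : ∀ x, 0 < conv f g x := conv_pos hfpos hgpos intU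
  have hhdiff : Differentiable ℝ (conv f g) := fun x => (hDd' x).differentiableAt
  have hhc : Continuous (conv f g) := hhdiff.continuous
  -- combined formula for the derivative
  have hcomb : ∀ x,
      ∫ y, (t * (deriv f (x - y) * g y) + s * (deriv g y * f (x - y))) = D x := by
    intro x
    have i1 : Integrable (fun y => t * (deriv f (x - y) * g y)) := (intD x).const_mul t
    have i2 : Integrable (fun y => s * (deriv g y * f (x - y))) := (intE x).const_mul s
    rw [integral_add i1 i2, MeasureTheory.integral_const_mul, MeasureTheory.integral_const_mul]
    have e : (∫ y, deriv g y * f (x - y)) = D x := by rw [← hEalt x, ← hDE x]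
    have e2 : (∫ y, deriv f (x - y) * g y) = D x := rfl
    rw [e, e2]
    linear_combination D x * hts
  -- the quadratic kernel on the product space
  have hK1 : Integrable (fun p : ℝ × ℝ =>
      (deriv f (p.1 - p.2)) ^ 2 / f (p.1 - p.2) * g p.2) (volume.prod volume) :=
    kernel_integrable hIf hgi
  have hK2 : Integrable (fun p : ℝ × ℝ =>
      deriv f (p.1 - p.2) * deriv g p.2) (volume.prod volume) :=
    kernel_integrable hf'i hg'i
  have hK3 : Integrable (fun p : ℝ × ℝ =>
      f (p.1 - p.2) * ((deriv g p.2) ^ 2 / g p.2)) (volume.prod volume) :=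
    kernel_integrable hfi hIg
  set Ψ : ℝ × ℝ → ℝ := fun p =>
    t ^ 2 * ((deriv f (p.1 - p.2)) ^ 2 / f (p.1 - p.2) * g p.2)
      + 2 * t * s * (deriv f (p.1 - p.2) * deriv g p.2)
      + s ^ 2 * (f (p.1 - p.2) * ((deriv g p.2) ^ 2 / g p.2)) with hΨ
  have h1 : Integrable (fun p : ℝ × ℝ =>
      t ^ 2 * ((deriv f (p.1 - p.2)) ^ 2 / f (p.1 - p.2) * g p.2)) (volume.prod volume) :=
    hK1.const_mul _
  have h2 : Integrable (fun p : ℝ × ℝ =>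
      2 * t * s * (deriv f (p.1 - p.2) * deriv g p.2)) (volume.prod volume) :=
    hK2.const_mul _
  have h3 : Integrable (fun p : ℝ × ℝ =>
      s ^ 2 * (f (p.1 - p.2) * ((deriv g p.2) ^ 2 / g p.2))) (volume.prod volume) :=
    hK3.const_mul _
  have h12 : Integrable (fun p : ℝ × ℝ =>
      t ^ 2 * ((deriv f (p.1 - p.2)) ^ 2 / f (p.1 - p.2) * g p.2)
        + 2 * t * s * (deriv f (p.1 - p.2) * deriv g p.2)) (volume.prod volume) := h1.add h2
  have hΨint : Integrable Ψ (volume.prod volume) := h12.add h3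
  have k1 : ∫ p : ℝ × ℝ, (deriv f (p.1 - p.2)) ^ 2 / f (p.1 - p.2) * g p.2
      ∂(volume.prod volume) = (∫ x, (deriv f x) ^ 2 / f x) * ∫ x, g x :=
    kernel_integral hIf hgi
  have k2 : ∫ p : ℝ × ℝ, deriv f (p.1 - p.2) * deriv g p.2
      ∂(volume.prod volume) = (∫ x, deriv f x) * ∫ x, deriv g x :=
    kernel_integral hf'i hg'i
  have k3 : ∫ p : ℝ × ℝ, f (p.1 - p.2) * ((deriv g p.2) ^ 2 / g p.2)
      ∂(volume.prod volume) = (∫ x, f x) * ∫ x, (deriv g x) ^ 2 / g x :=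
    kernel_integral hfi hIg
  have hzf : ∫ x, deriv f x = 0 := integral_deriv_zero hf hfi hf'i
  have hΨval : ∫ p, Ψ p ∂(volume.prod volume)
      = t ^ 2 * fisherInfo f + s ^ 2 * fisherInfo g := by
    simp only [hΨ]
    rw [integral_add h12 h3, integral_add h1 h2, MeasureTheory.integral_const_mul,
      MeasureTheory.integral_const_mul, MeasureTheory.integral_const_mul,
      k1, k2, k3, hf1, hg1, hzf]
    simp only [fisherInfo]
    ring
  set G : ℝ → ℝ := fun x => ∫ y, Ψ (x, y) with hG
  have hGint : Integrable G := hΨint.integral_prod_left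
  have hGval : ∫ x, G x = t ^ 2 * fisherInfo f + s ^ 2 * fisherInfo g := by
    rw [← hΨval]
    exact MeasureTheory.integral_integral hΨint
  -- pointwise Cauchy-Schwarz bound, almost everywhere
  have hae : ∀ᵐ x, (D x) ^ 2 / conv f g x ≤ G x := by
    filter_upwards [hΨint.prod_right_ae] with x hx
    set u : ℝ → ℝ := fun y => Real.sqrt (f (x - y) * g y) with hu
    set w : ℝ → ℝ := fun y =>
      t * (deriv f (x - y) / f (x - y)) + s * (deriv g y / g y) with hw
    have hu2 : ∀ y, u y ^ 2 = f (x - y) * g y := fun y =>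
      Real.sq_sqrt (mul_pos (hfpos _) (hgpos _)).le
    have huv : ∀ y, u y * (w y * u y)
        = t * (deriv f (x - y) * g y) + s * (deriv g y * f (x - y)) := by
      intro y
      have hfy := (hfpos (x - y)).ne'
      have hgy := (hgpos y).ne'
      have e : u y * (w y * u y) = w y * u y ^ 2 := by ring
      rw [e, hu2 y, hw]
      field_simp
    have hv2 : ∀ y, (w y * u y) ^ 2 = Ψ (x, y) := by
      intro y
      have hfy := (hfpos (x - y)).ne'
      have hgy := (hgpos y).ne'
      have e : (w y * u y) ^ 2 = w y ^ 2 * u y ^ 2 := by ring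
      rw [e, hu2 y, hw, hΨ]
      field_simp
      ring
    have hu2i : Integrable (fun y => u y ^ 2) := by
      rw [show (fun y => u y ^ 2) = fun y => f (x - y) * g y from funext hu2]
      exact intU x
    have huvi : Integrable (fun y => u y * (w y * u y)) := by
      rw [show (fun y => u y * (w y * u y)) = fun y =>
        t * (deriv f (x - y) * g y) + s * (deriv g y * f (x - y)) from funext huv]
      exact ((intD x).const_mul t).add ((intE x).const_mul s)
    have hv2i : Integrable (fun y => (w y * u y) ^ 2) := by
      rw [show (fun y => (w y * u y) ^ 2) = fun y => Ψ (x, y) from funext hv2]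
      exact hx
    have hcs := cs_integral hu2i hv2i huvi
    have e1 : ∫ y, u y * (w y * u y) = D x := by
      rw [show (fun y => u y * (w y * u y)) = fun y =>
        t * (deriv f (x - y) * g y) + s * (deriv g y * f (x - y)) from funext huv]
      exact hcomb x
    have e2 : ∫ y, u y ^ 2 = conv f g x := by
      rw [show (fun y => u y ^ 2) = fun y => f (x - y) * g y from funext hu2]
      rfl
    have e3 : ∫ y, (w y * u y) ^ 2 = G x := by
      rw [show (fun y => (w y * u y) ^ 2) = fun y => Ψ (x, y) from funext hv2]
    rw [e1, e2, e3] at hcs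
    rw [div_le_iff₀ (hhpos x)]
    nlinarith [hcs]
  -- conclude
  have hfid : fisherInfo (conv f g) = ∫ x, (D x) ^ 2 / conv f g x := by
    rw [fisherInfo]
    congr 1; funext x; rw [hderiv x]
  have hQint : Integrable (fun x => (D x) ^ 2 / conv f g x) := by
    refine hGint.mono' ?_ ?_
    · exact ((hDc.pow 2).div hhc fun x => (hhpos x).ne').aestronglyMeasurable
    · filter_upwards [hae] with x hx
      rw [Real.norm_eq_abs, abs_of_nonneg (div_nonneg (sq_nonneg _) (hhpos x).le)]
      exact hx
  have hmain : fisherInfo (conv f g) ≤ t ^ 2 * fisherInfo f + s ^ 2 * fisherInfo g := by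
    calc fisherInfo (conv f g) = ∫ x, (D x) ^ 2 / conv f g x := hfid
      _ ≤ ∫ x, G x := integral_mono_ae hQint hGint hae
      _ = _ := hGval
  calc (a + b) ^ 2 * fisherInfo (conv f g)
      ≤ (a + b) ^ 2 * (t ^ 2 * fisherInfo f + s ^ 2 * fisherInfo g) :=
        mul_le_mul_of_nonneg_left hmain (by positivity)
    _ = a ^ 2 * fisherInfo f + b ^ 2 * fisherInfo g := by
        rw [ht, hs]; field_simp
end

section
/- Let p, q, r > 1 satisfy 1/p + 1/q = 1 + 1/r, and let u, v be probability density functions on ℝ. Then ∫_ℝ ( (u^{1/p} * v^{1/q})(x) )^r dx ≤ 2^r; in particular the integral is finite. -/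
open MeasureTheory Real
open scoped ENNReal

/-!
Writing `f = u(x - ·)` and `g = v`, split `f^{1/p} g^{1/q} = (f g)^{1/r} f^{1 - 1/q} g^{1 - 1/p}`;
the three exponents sum to `1`, so Hölder's inequality bounds the inner integral by
`(∫ f g)^{1/r}` times powers of `∫ f = ∫ g = 1`. Raising to the power `r` and integrating in `x`
leaves `∫∫ u(x - y) v(y) dy dx = 1`, by Tonelli and translation invariance. Hence the integral is
even at most `1`.
-/

section Holder

variable {α : Type*} [MeasurableSpace α] {μ : Measure α} {f g : α → ℝ≥0∞}

/-- Hölder's inequality for the three functions `f * g`, `f`, `g`, with the exponents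
`1/r + (1 - 1/q) + (1 - 1/p) = 1`. -/
theorem lintegral_rpow_mul_rpow_le {p q r : ℝ} (hp : 1 ≤ p) (hq : 1 ≤ q) (hr : 0 ≤ r)
    (hpqr : 1/p + 1/q = 1 + 1/r) (hf : AEMeasurable f μ) (hg : AEMeasurable g μ) :
    ∫⁻ a, f a ^ (1/p) * g a ^ (1/q) ∂μ ≤
      (∫⁻ a, f a * g a ∂μ) ^ (1/r) * (∫⁻ a, f a ∂μ) ^ (1 - 1/q) * (∫⁻ a, g a ∂μ) ^ (1 - 1/p) := by
  simp only [one_div] at hpqr ⊢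
  have hp' : p⁻¹ ≤ 1 := inv_le_one_of_one_le₀ hp
  have hq' : q⁻¹ ≤ 1 := inv_le_one_of_one_le₀ hq
  have hr' : 0 ≤ r⁻¹ := inv_nonneg.mpr hr
  have hsplit : ∀ a, f a ^ p⁻¹ * g a ^ q⁻¹ =
      (f a * g a) ^ r⁻¹ * f a ^ (1 - q⁻¹) * g a ^ (1 - p⁻¹) := by
    intro a
    rw [ENNReal.mul_rpow_of_nonneg _ _ hr', mul_assoc, mul_mul_mul_comm,
      ← ENNReal.rpow_add_of_nonneg _ _ hr' (by linarith),
      ← ENNReal.rpow_add_of_nonneg _ _ hr' (by linarith)]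
    congr 2 <;> linarith
  simpa [hsplit, Fin.prod_univ_three, mul_assoc] using
    ENNReal.lintegral_prod_norm_pow_le (μ := μ) Finset.univ
      (f := ![fun a => f a * g a, f, g]) (p := ![r⁻¹, 1 - q⁻¹, 1 - p⁻¹])
      (by simp [Fin.forall_fin_succ, hf, hg]; fun_prop)
      (by simp only [Fin.sum_univ_three]; simp; linarith)
      (by simpa [Fin.forall_fin_succ] using ⟨hr, hq', hp'⟩)

end Holder

section Young

variable {G : Type*} [MeasurableSpace G] [AddCommGroup G] [MeasurableAdd₂ G] [MeasurableNeg G]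
  {μ : Measure G} [SFinite μ] [μ.IsAddLeftInvariant] {f g : G → ℝ≥0∞}

theorem lintegral_lintegral_sub_mul (hf : Measurable f) (hg : Measurable g) :
    ∫⁻ x, ∫⁻ y, f (x - y) * g y ∂μ ∂μ = (∫⁻ x, f x ∂μ) * ∫⁻ y, g y ∂μ := by
  rw [lintegral_lintegral_swap (by fun_prop), ← lintegral_const_mul _ hg]
  congr 1 with y
  rw [lintegral_mul_const _ (by fun_prop), lintegral_sub_right_eq_self f, mul_comm]

/-- Young's convolution inequality `‖f^{1/p} ⋆ g^{1/q}‖_r^r ≤ ‖f^{1/p}‖_p^r ‖g^{1/q}‖_q^r`. -/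
theorem lintegral_conv_rpow_rpow_le [μ.IsNegInvariant] {p q r : ℝ} (hp : 1 ≤ p) (hq : 1 ≤ q)
    (hr : 0 < r) (hpqr : 1/p + 1/q = 1 + 1/r) (hf : Measurable f) (hg : Measurable g) :
    ∫⁻ x, (∫⁻ y, f (x - y) ^ (1/p) * g y ^ (1/q) ∂μ) ^ r ∂μ ≤
      (∫⁻ x, f x ∂μ) ^ (r/p) * (∫⁻ y, g y ∂μ) ^ (r/q) := by
  set F := ∫⁻ x, f x ∂μ
  set H := ∫⁻ y, g y ∂μ
  have hpointwise : ∀ x, (∫⁻ y, f (x - y) ^ (1/p) * g y ^ (1/q) ∂μ) ^ r ≤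
      (∫⁻ y, f (x - y) * g y ∂μ) * (F ^ (r - r/q) * H ^ (r - r/p)) := by
    intro x
    have hfx : Measurable fun y => f (x - y) := hf.comp (measurable_const.sub measurable_id)
    calc (∫⁻ y, f (x - y) ^ (1/p) * g y ^ (1/q) ∂μ) ^ r
        ≤ ((∫⁻ y, f (x - y) * g y ∂μ) ^ (1/r) * F ^ (1 - 1/q) * H ^ (1 - 1/p)) ^ r := by
          gcongr
          simpa only [lintegral_sub_left_eq_self f x] using
            lintegral_rpow_mul_rpow_le (μ := μ) hp hq hr.le hpqr hfx.aemeasurable hg.aemeasurable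
      _ = (∫⁻ y, f (x - y) * g y ∂μ) * (F ^ (r - r/q) * H ^ (r - r/p)) := by
          rw [ENNReal.mul_rpow_of_nonneg _ _ hr.le, ENNReal.mul_rpow_of_nonneg _ _ hr.le,
            ← ENNReal.rpow_mul, ← ENNReal.rpow_mul, ← ENNReal.rpow_mul,
            one_div_mul_cancel hr.ne', ENNReal.rpow_one, mul_assoc]
          congr 3 <;> field_simp
  calc ∫⁻ x, (∫⁻ y, f (x - y) ^ (1/p) * g y ^ (1/q) ∂μ) ^ r ∂μ
      ≤ ∫⁻ x, (∫⁻ y, f (x - y) * g y ∂μ) * (F ^ (r - r/q) * H ^ (r - r/p)) ∂μ :=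
        lintegral_mono hpointwise
    _ = F * H * (F ^ (r - r/q) * H ^ (r - r/p)) := by
        rw [lintegral_mul_const _ (Measurable.lintegral_prod_right'
          (f := fun z : G × G => f (z.1 - z.2) * g z.2) (by fun_prop)),
          lintegral_lintegral_sub_mul hf hg]
    _ = F ^ (r/p) * H ^ (r/q) := by
        have hr1 : r/p + r/q = 1 + r := by
          field_simp at hpqr ⊢; linarith
        have mul_rpow_eq {a : ℝ≥0∞} {s t : ℝ} (hs : 0 ≤ s) (hst : 1 + s = t) :
            a * a ^ s = a ^ t := by
          rw [← hst, ENNReal.rpow_add_of_nonneg _ _ zero_le_one hs, ENNReal.rpow_one]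
        rw [mul_mul_mul_comm,
          mul_rpow_eq (t := r/p) (sub_nonneg.mpr (div_le_self hr.le hq)) (by linarith),
          mul_rpow_eq (t := r/q) (sub_nonneg.mpr (div_le_self hr.le hp)) (by linarith)]

end Young

/-- For `p, q, r > 1` with `1/p + 1/q = 1 + 1/r` and probability densities `u, v` on `ℝ`,
`∫ ( (u^{1/p} * v^{1/q})(x) )^r dx ≤ 2^r`; in particular the integral is finite.
(The convolution and the integral are taken in the extended nonnegative reals, so this
also expresses finiteness.) -/
theorem conv_pow_integral_le (p q r : ℝ) (hp : 1 < p) (hq : 1 < q) (hr : 1 < r)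
    (hpqr : 1/p + 1/q = 1 + 1/r) (u v : ℝ → ℝ)
    (hum : Measurable u) (hvm : Measurable v)
    (hu0 : ∀ x, 0 ≤ u x) (hv0 : ∀ x, 0 ≤ v x)
    (hui : Integrable u) (hvi : Integrable v)
    (hu1 : ∫ x, u x = 1) (hv1 : ∫ x, v x = 1) :
    ∫⁻ x, (∫⁻ y, ENNReal.ofReal (u (x - y) ^ (1/p) * v y ^ (1/q))) ^ r ≤
      ENNReal.ofReal (2 ^ r) := by
  have hU1 : ∫⁻ x, ENNReal.ofReal (u x) = 1 := by
    rw [← ofReal_integral_eq_lintegral_ofReal hui (.of_forall hu0), hu1, ENNReal.ofReal_one]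
  have hV1 : ∫⁻ x, ENNReal.ofReal (v x) = 1 := by
    rw [← ofReal_integral_eq_lintegral_ofReal hvi (.of_forall hv0), hv1, ENNReal.ofReal_one]
  have hofReal : ∀ x y, ENNReal.ofReal (u (x - y) ^ (1/p) * v y ^ (1/q)) =
      ENNReal.ofReal (u (x - y)) ^ (1/p) * ENNReal.ofReal (v y) ^ (1/q) := fun x y => by
    rw [ENNReal.ofReal_mul (rpow_nonneg (hu0 _) _),
      ENNReal.ofReal_rpow_of_nonneg (hu0 _) (by positivity),
      ENNReal.ofReal_rpow_of_nonneg (hv0 _) (by positivity)]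
  calc ∫⁻ x, (∫⁻ y, ENNReal.ofReal (u (x - y) ^ (1/p) * v y ^ (1/q))) ^ r
      ≤ (∫⁻ x, ENNReal.ofReal (u x)) ^ (r/p) * (∫⁻ y, ENNReal.ofReal (v y)) ^ (r/q) := by
        simpa only [hofReal] using lintegral_conv_rpow_rpow_le hp.le hq.le (by linarith) hpqr
          hum.ennreal_ofReal hvm.ennreal_ofReal
    _ = 1 := by rw [hU1, hV1, ENNReal.one_rpow, ENNReal.one_rpow, one_mul]
    _ ≤ ENNReal.ofReal (2 ^ r) :=
        ENNReal.one_le_ofReal.mpr (one_le_rpow one_le_two (by linarith))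
end

section
/- Let p, q, r > 1 satisfy 1/p + 1/q = 1 + 1/r, and let p', q', r' denote the dual exponents. Then C(p,q,r) = ( ∫_ℝ ( (M_{q'/p})^{1/p} * (M_{p'/q})^{1/q} )(x)^r dx )^{1/r} = A_p A_q A_{r'}, where A_m = (m^{1/m}/m'^{1/m'})^{1/2}. -/
open MeasureTheory Real

/-- The constant `A_m = (m^{1/m}/m'^{1/m'})^{1/2}`, where `m'` is the dual exponent. -/
noncomputable def sharpA (m m' : ℝ) : ℝ := (m ^ (1/m) / m' ^ (1/m')) ^ ((1:ℝ)/2)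

/-!
A power of a Gaussian is a multiple of a Gaussian, `M_s ^ t = (2πs)^((1-t)/2) t^(-1/2) M_{s/t}`,
and Gaussians form a convolution semigroup, `M_a * M_b = M_{a+b}`. Hence the convolution is an
explicit multiple of `M_{q'+p'}`, whose `r`-th power is again an explicit multiple of a Gaussian
and so integrates in closed form. Comparing logarithms of the resulting constant with those of
`A_p A_q A_{r'}` is then linear algebra in the exponent relations.
-/

lemma gauss_pos {s : ℝ} (hs : 0 < s) (x : ℝ) : 0 < gauss s x := by
  unfold gauss; positivity

lemma integral_gauss {s : ℝ} (hs : 0 < s) : ∫ x, gauss s x = 1 := by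
  have hpdf : gauss s = ProbabilityTheory.gaussianPDFReal 0 s.toNNReal := by
    ext x
    rw [ProbabilityTheory.gaussianPDFReal_def, gauss, coe_toNNReal _ hs.le, sqrt_eq_rpow,
      ← rpow_neg (by positivity), neg_div]
    simp only [sub_zero]
  rw [hpdf, ProbabilityTheory.integral_gaussianPDFReal_eq_one 0 (by simpa using hs)]

noncomputable def gaussRpowConst (s t : ℝ) : ℝ := (2 * π * s) ^ ((1 - t) / 2) * t ^ (-(1:ℝ)/2)

lemma gaussRpowConst_pos {s t : ℝ} (hs : 0 < s) (ht : 0 < t) : 0 < gaussRpowConst s t := by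
  unfold gaussRpowConst; positivity

lemma log_gaussRpowConst {s t : ℝ} (hs : 0 < s) (ht : 0 < t) :
    log (gaussRpowConst s t) = ((1 - t) * log (2 * π * s) - log t) / 2 := by
  rw [gaussRpowConst, log_mul (by positivity) (by positivity), log_rpow (by positivity),
    log_rpow ht]
  ring

lemma gauss_rpow {s t : ℝ} (hs : 0 < s) (ht : 0 < t) (x : ℝ) :
    gauss s x ^ t = gaussRpowConst s t * gauss (s / t) x := by
  have h2πs : 0 < 2 * π * s := by positivity
  have hconst : ((2 * π * s) ^ (-(1:ℝ)/2)) ^ t =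
      gaussRpowConst s t * (2 * π * (s / t)) ^ (-(1:ℝ)/2) := by
    rw [gaussRpowConst, ← rpow_mul h2πs.le, ← mul_div_assoc, div_rpow h2πs.le ht.le]
    field_simp
    rw [← rpow_add h2πs]
    ring_nf
  unfold gauss
  rw [mul_rpow (by positivity) (exp_pos _).le, ← exp_mul, hconst]
  field_simp

lemma integral_gauss_rpow {s t : ℝ} (hs : 0 < s) (ht : 0 < t) :
    ∫ x, gauss s x ^ t = gaussRpowConst s t := by
  simp_rw [gauss_rpow hs ht]
  rw [integral_const_mul, integral_gauss (div_pos hs ht), mul_one]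

lemma integral_const_mul_gauss_rpow {c s t : ℝ} (hc : 0 ≤ c) (hs : 0 < s) (ht : 0 < t) :
    ∫ x, (c * gauss s x) ^ t = c ^ t * gaussRpowConst s t := by
  simp_rw [mul_rpow hc (gauss_pos hs _).le]
  rw [integral_const_mul, integral_gauss_rpow hs ht]

/-- Completing the square in `y`. -/
lemma gauss_mul_gauss_sub {a b : ℝ} (ha : 0 < a) (hb : 0 < b) (x y : ℝ) :
    gauss a (x - y) * gauss b y =
      gauss (a + b) x * gauss (a * b / (a + b)) (y - b * x / (a + b)) := by
  have hconst : (2 * π * a) ^ (-(1:ℝ)/2) * (2 * π * b) ^ (-(1:ℝ)/2) =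
      (2 * π * (a + b)) ^ (-(1:ℝ)/2) * (2 * π * (a * b / (a + b))) ^ (-(1:ℝ)/2) := by
    rw [← mul_rpow (by positivity) (by positivity), ← mul_rpow (by positivity) (by positivity)]
    congr 1
    field_simp
  have hexp : exp (-(x - y) ^ 2 / (2 * a)) * exp (-y ^ 2 / (2 * b)) =
      exp (-x ^ 2 / (2 * (a + b))) *
        exp (-(y - b * x / (a + b)) ^ 2 / (2 * (a * b / (a + b)))) := by
    rw [← exp_add, ← exp_add]
    congr 1
    field_simp
    ring
  unfold gauss
  rw [mul_mul_mul_comm, hconst, hexp, mul_mul_mul_comm]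

lemma conv_gauss {a b : ℝ} (ha : 0 < a) (hb : 0 < b) :
    conv (gauss a) (gauss b) = gauss (a + b) := by
  ext x
  simp only [conv, gauss_mul_gauss_sub ha hb]
  rw [integral_const_mul, integral_sub_right_eq_self (gauss (a * b / (a + b))),
    integral_gauss (by positivity), mul_one]

lemma conv_const_mul (c d : ℝ) (f g : ℝ → ℝ) :
    conv (fun y => c * f y) (fun y => d * g y) = fun x => c * d * conv f g x := by
  ext x
  simp only [conv, ← integral_const_mul]
  congr 1 with y
  ring

lemma sharpA_pos {m m' : ℝ} (hm : 0 < m) (hm' : 0 < m') : 0 < sharpA m m' := by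
  unfold sharpA; positivity

lemma log_sharpA {m m' : ℝ} (hm : 0 < m) (hm' : 0 < m') :
    log (sharpA m m') = (log m / m - log m' / m') / 2 := by
  rw [sharpA, log_rpow (by positivity), log_div (by positivity) (by positivity),
    log_rpow hm, log_rpow hm']
  ring

lemma pos_of_one_div_add_one_div_eq_one {m m' : ℝ} (hm : 1 < m) (h : 1/m + 1/m' = 1) :
    0 < m' :=
  (Real.holderConjugate_iff.mpr ⟨hm, by simpa only [one_div] using h⟩).symm.pos

lemma gaussRpowConst_mul_eq_sharpA_mul {p q r p' q' r' : ℝ} (hp : 1 < p) (hq : 1 < q)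
    (hr : 1 < r) (hpqr : 1/p + 1/q = 1 + 1/r)
    (hp' : 1/p + 1/p' = 1) (hq' : 1/q + 1/q' = 1) (hr' : 1/r + 1/r' = 1) :
    gaussRpowConst (q'/p) (1/p) * gaussRpowConst (p'/q) (1/q) *
        gaussRpowConst (q' + p') r ^ (1/r) =
      sharpA p p' * sharpA q q' * sharpA r' r := by
  have hp0 : 0 < p := by positivity
  have hq0 : 0 < q := by positivity
  have hr0 : 0 < r := by positivity
  have hp'0 := pos_of_one_div_add_one_div_eq_one hp hp'
  have hq'0 := pos_of_one_div_add_one_div_eq_one hq hq'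
  have hr'0 := pos_of_one_div_add_one_div_eq_one hr hr'
  have h2π : 0 < 2 * π := by positivity
  have hlog₁ : log (2 * π * (q' / p)) = log (2 * π) + log q' - log p := by
    rw [log_mul h2π.ne' (by positivity), log_div hq'0.ne' hp0.ne']; ring
  have hlog₂ : log (2 * π * (p' / q)) = log (2 * π) + log p' - log q := by
    rw [log_mul h2π.ne' (by positivity), log_div hp'0.ne' hq0.ne']; ring
  have hlog₃ : log (2 * π * (q' + p')) = log (2 * π) + log p' + log q' - log r' := by
    have hsum : q' + p' = p' * q' / r' := by
      have h : 1/p' + 1/q' = 1/r' := by linarith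
      field_simp at h ⊢
      linarith
    rw [hsum, log_mul h2π.ne' (by positivity), log_div (by positivity) hr'0.ne',
      log_mul hp'0.ne' hq'0.ne']; ring
  have hC₁ := gaussRpowConst_pos (div_pos hq'0 hp0) (one_div_pos.mpr hp0)
  have hC₂ := gaussRpowConst_pos (div_pos hp'0 hq0) (one_div_pos.mpr hq0)
  have hC₃ := gaussRpowConst_pos (add_pos hq'0 hp'0) hr0
  have hA₁ := sharpA_pos hp0 hp'0
  have hA₂ := sharpA_pos hq0 hq'0
  have hA₃ := sharpA_pos hr'0 hr0
  apply log_injOn_pos (Set.mem_Ioi.mpr (by positivity)) (Set.mem_Ioi.mpr (by positivity))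
  rw [log_mul (by positivity) (by positivity), log_mul hC₁.ne' hC₂.ne', log_rpow hC₃,
    log_gaussRpowConst (div_pos hq'0 hp0) (one_div_pos.mpr hp0),
    log_gaussRpowConst (div_pos hp'0 hq0) (one_div_pos.mpr hq0),
    log_gaussRpowConst (add_pos hq'0 hp'0) hr0,
    log_mul (by positivity) hA₃.ne', log_mul hA₁.ne' hA₂.ne',
    log_sharpA hp0 hp'0, log_sharpA hq0 hq'0, log_sharpA hr'0 hr0, hlog₁, hlog₂, hlog₃,
    one_div, log_inv, one_div, log_inv]
  linear_combination (-(log (2 * π) + log q' + log p') / 2) * hpqr + (log q' / 2) * hq'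
    + (log p' / 2) * hp' - (log r' / 2) * hr'
    - ((log (2 * π) + log p' + log q' - log r') / 2) * one_div_mul_cancel hr0.ne'

/-- `C(p,q,r) = ( ∫ (M_{q'/p}^{1/p} * M_{p'/q}^{1/q})^r )^{1/r} = A_p A_q A_{r'}`
(the dual exponent of `r'` being `r` itself). -/
theorem gaussian_const_eq_sharp_young_const (p q r p' q' r' : ℝ)
    (hp : 1 < p) (hq : 1 < q) (hr : 1 < r)
    (hpqr : 1/p + 1/q = 1 + 1/r)
    (hp' : 1/p + 1/p' = 1) (hq' : 1/q + 1/q' = 1) (hr' : 1/r + 1/r' = 1) :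
    (∫ x, conv (fun y => gauss (q'/p) y ^ (1/p))
        (fun y => gauss (p'/q) y ^ (1/q)) x ^ r) ^ (1/r) =
      sharpA p p' * sharpA q q' * sharpA r' r := by
  have hp0 : 0 < p := by positivity
  have hq0 : 0 < q := by positivity
  have hr0 : 0 < r := by positivity
  have hp'0 := pos_of_one_div_add_one_div_eq_one hp hp'
  have hq'0 := pos_of_one_div_add_one_div_eq_one hq hq'
  have hf : (fun y => gauss (q'/p) y ^ (1/p)) =
      fun y => gaussRpowConst (q'/p) (1/p) * gauss q' y := by
    ext y
    rw [gauss_rpow (by positivity) (by positivity), show q'/p/(1/p) = q' by field_simp]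
  have hg : (fun y => gauss (p'/q) y ^ (1/q)) =
      fun y => gaussRpowConst (p'/q) (1/q) * gauss p' y := by
    ext y
    rw [gauss_rpow (by positivity) (by positivity), show p'/q/(1/q) = p' by field_simp]
  have hC₁ := gaussRpowConst_pos (div_pos hq'0 hp0) (one_div_pos.mpr hp0)
  have hC₂ := gaussRpowConst_pos (div_pos hp'0 hq0) (one_div_pos.mpr hq0)
  rw [hf, hg, conv_const_mul, conv_gauss hq'0 hp'0,
    integral_const_mul_gauss_rpow (by positivity) (add_pos hq'0 hp'0) hr0,
    mul_rpow (by positivity) (gaussRpowConst_pos (add_pos hq'0 hp'0) hr0).le,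
    ← rpow_mul (by positivity), mul_one_div_cancel hr0.ne', rpow_one]
  exact gaussRpowConst_mul_eq_sharpA_mul hp hq hr hpqr hp' hq' hr'
end
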